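/- arXiv:1409.1549 — 2 statements merged into one kernel-verified Lean document; each statement's English description precedes it below -/
import Mathlib

section
/- Let P be a right LCM monoid and S = {[p,q] : p,q ∈ P} ∪ {0} with the multiplication [a,b][c,d] = [ab', dc'] if bP ∩ cP = rP with bb' = cc' = r, and 0 otherwise (0 absorbing). Then this multiplication is associative. -/
/-- The principal right ideal `pP` of a monoid. -/
def rI {M : Type*} [Monoid M] (p : M) : Set M := {x | ∃ y, x = p * y}

/-- A right LCM monoid: left cancellative, and any two principal right ideals are
either disjoint or intersect in another principal right ideal. -/
class RightLCM (M : Type*) extends Monoid M where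
  mul_left_cancel' : ∀ a b c : M, a * b = a * c → b = c
  lcm : ∀ p q : M, rI p ∩ rI q = ∅ ∨ ∃ r : M, rI p ∩ rI q = rI r

namespace RightLCM

variable {M : Type*} [RightLCM M]

/-- The equivalence relation `(p,q) ∼ (pu,qu)` for units `u`. -/
def peq (x y : M × M) : Prop := ∃ u : M, IsUnit u ∧ x.1 = y.1 * u ∧ x.2 = y.2 * u

theorem peq_equivalence : Equivalence (peq (M := M)) := by
  constructor
  · intro x; exact ⟨1, isUnit_one, by simp, by simp⟩
  · rintro x y ⟨u, hu, h1, h2⟩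
    obtain ⟨w, hw⟩ := hu
    subst hw
    exact ⟨↑w⁻¹, Units.isUnit _, by rw [h1, mul_assoc, w.mul_inv, mul_one],
      by rw [h2, mul_assoc, w.mul_inv, mul_one]⟩
  · rintro x y z ⟨u, hu, h1, h2⟩ ⟨v, hv, h3, h4⟩
    exact ⟨v * u, hv.mul hu, by rw [h1, h3, mul_assoc], by rw [h2, h4, mul_assoc]⟩

instance pSetoid : Setoid (M × M) := ⟨peq, peq_equivalence⟩

/-- The inverse semigroup `S = {[p,q] : p,q ∈ P} ∪ {0}` associated to a right LCM monoid. -/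
abbrev S (M : Type*) [RightLCM M] := WithZero (Quotient (pSetoid (M := M)))

/-- The class `[p,q]` as an element of `S M`. -/
def cls (p q : M) : S M := (Quotient.mk (pSetoid (M := M)) (p, q) : Quotient (pSetoid (M := M)))

open scoped Classical in
/-- Product of two representatives: `[a,b][c,d] = [ab', dc']` when `bP ∩ cP = rP` with
`bb' = cc' = r`, and `0` when `bP ∩ cP = ∅`. -/
noncomputable def mulPair (x y : M × M) : S M :=
  if h : rI x.2 ∩ rI y.1 = ∅ then 0
  else
    have hr := (RightLCM.lcm x.2 y.1).resolve_left h
    have hmem : Classical.choose hr ∈ rI x.2 ∩ rI y.1 :=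
      (Set.ext_iff.mp (Classical.choose_spec hr) _).mpr ⟨1, (mul_one _).symm⟩
    cls (x.1 * Classical.choose hmem.1) (y.2 * Classical.choose hmem.2)

/-- The multiplication on `S M` (with `0` absorbing). -/
noncomputable def smul : S M → S M → S M
  | none, _ => 0
  | some _, none => 0
  | some a, some b => mulPair a.out b.out

/-- The involution `[p,q]* = [q,p]` on `S M`. -/
noncomputable def star : S M → S M
  | none => 0
  | some a => cls a.out.2 a.out.1

end RightLCM

/-!
If `bP ∩ cP = bzP`, then left cancellation gives `byP ∩ cP = b(yP ∩ zP)`. Let `a₂s = b₁t` and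
`b₂u = c₁v` generate the intersections of adjacent factors of `[a₁,a₂][b₁,b₂][c₁,c₂]`. Both ways
of bracketing then meet the ideal `tP ∩ uP`, translated by `b₂` resp. `b₁`: both products vanish
when it is empty, and both equal `[a₁st', c₂vu']` when it is `tt'P` with `tt' = uu'`.
-/

namespace RightLCM

section Monoid

variable {M : Type*} [Monoid M]

theorem mem_rI_self (p : M) : p ∈ rI p := ⟨1, (mul_one p).symm⟩

theorem rI_mul_subset (p q : M) : rI (p * q) ⊆ rI p := by
  rintro x ⟨y, rfl⟩
  exact ⟨q * y, mul_assoc p q y⟩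

theorem rI_mul_of_isUnit (p : M) {u : M} (hu : IsUnit u) : rI (p * u) = rI p := by
  refine (rI_mul_subset p u).antisymm ?_
  rintro x ⟨y, rfl⟩
  exact ⟨hu.unit⁻¹ * y, by rw [mul_assoc, ← mul_assoc u, hu.mul_val_inv, one_mul]⟩

theorem image_mul_left_rI (b m : M) : (b * ·) '' rI m = rI (b * m) := by
  ext x
  constructor
  · rintro ⟨_, ⟨y, rfl⟩, rfl⟩
    exact ⟨y, (mul_assoc b m y).symm⟩
  · rintro ⟨y, rfl⟩
    exact ⟨m * y, ⟨y, rfl⟩, (mul_assoc b m y).symm⟩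

end Monoid

variable {M : Type*} [RightLCM M]

theorem mul_left_cancel {a b c : M} (h : a * b = a * c) : b = c :=
  mul_left_cancel' a b c h

theorem disjoint_or_exists_lcm (b c : M) :
    rI b ∩ rI c = ∅ ∨ ∃ b' c', rI b ∩ rI c = rI (b * b') ∧ b * b' = c * c' := by
  refine (lcm b c).imp_right fun ⟨r, hr⟩ => ?_
  obtain ⟨⟨b', hb⟩, ⟨c', hc⟩⟩ : r ∈ rI b ∩ rI c := hr ▸ mem_rI_self r
  exact ⟨b', c', hb ▸ hr, hb.symm.trans hc⟩

theorem exists_isUnit_of_rI_eq {p q : M} (h : rI p = rI q) : ∃ u, IsUnit u ∧ q = p * u := by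
  obtain ⟨y, hy⟩ : p ∈ rI q := h ▸ mem_rI_self p
  obtain ⟨z, hz⟩ : q ∈ rI p := h.symm ▸ mem_rI_self q
  have hzy : z * y = 1 := mul_left_cancel (by rw [← mul_assoc, ← hz, ← hy, mul_one])
  have hyz : y * z = 1 := mul_left_cancel (by rw [← mul_assoc, ← hy, ← hz, mul_one])
  exact ⟨z, ⟨⟨z, y, hzy, hyz⟩, rfl⟩, hz⟩

theorem rI_mul_inter_rI {b c y z : M} (h : rI b ∩ rI c = rI (b * z)) :
    rI (b * y) ∩ rI c = (b * ·) '' (rI y ∩ rI z) := by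
  ext q
  constructor
  · rintro ⟨⟨s, rfl⟩, hc⟩
    obtain ⟨t, ht⟩ : b * y * s ∈ rI (b * z) := h ▸ ⟨⟨y * s, mul_assoc b y s⟩, hc⟩
    have hys : y * s = z * t := mul_left_cancel (by rw [← mul_assoc, ht, mul_assoc])
    exact ⟨y * s, ⟨⟨s, rfl⟩, ⟨t, hys⟩⟩, (mul_assoc b y s).symm⟩
  · rintro ⟨_, ⟨⟨s, rfl⟩, ⟨t, hyz⟩⟩, rfl⟩
    refine ⟨⟨s, (mul_assoc b y s).symm⟩, ?_⟩
    have hbz : b * (y * s) ∈ rI (b * z) := ⟨t, by rw [hyz, mul_assoc]⟩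
    exact (h ▸ hbz : b * (y * s) ∈ rI b ∩ rI c).2

theorem cls_eq_cls_of_peq {p q p' q' : M} (h : peq (p, q) (p', q')) : cls p q = cls p' q' :=
  congrArg WithZero.coe (Quotient.sound h)

theorem mulPair_eq_zero {x y : M × M} (h : rI x.2 ∩ rI y.1 = ∅) : mulPair x y = 0 := by
  rw [mulPair, dif_pos h]

theorem mulPair_eq_cls {x y : M × M} {r b c : M} (hr : rI x.2 ∩ rI y.1 = rI r)
    (hb : r = x.2 * b) (hc : r = y.1 * c) : mulPair x y = cls (x.1 * b) (y.2 * c) := by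
  have hne : rI x.2 ∩ rI y.1 ≠ ∅ := hr ▸ (Set.nonempty_of_mem (mem_rI_self r)).ne_empty
  rw [mulPair, dif_neg hne]
  dsimp only
  generalize_proofs hr₀ hb₀ hc₀
  obtain ⟨u, hu, hru⟩ := exists_isUnit_of_rI_eq (hr.symm.trans (Classical.choose_spec hr₀))
  have hbu : Classical.choose hb₀ = b * u :=
    mul_left_cancel (by rw [← Classical.choose_spec hb₀, hru, hb, mul_assoc])
  have hcu : Classical.choose hc₀ = c * u :=
    mul_left_cancel (by rw [← Classical.choose_spec hc₀, hru, hc, mul_assoc])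
  rw [hbu, hcu, ← mul_assoc, ← mul_assoc]
  exact cls_eq_cls_of_peq ⟨u, hu, rfl, rfl⟩

theorem mulPair_congr {x x' y y' : M × M} (hx : peq x x') (hy : peq y y') :
    mulPair x y = mulPair x' y' := by
  obtain ⟨u, hu, hx₁, hx₂⟩ := hx
  obtain ⟨v, hv, hy₁, hy₂⟩ := hy
  have hx' : rI x.2 = rI x'.2 := by rw [hx₂, rI_mul_of_isUnit _ hu]
  have hy' : rI y.1 = rI y'.1 := by rw [hy₁, rI_mul_of_isUnit _ hv]
  rcases lcm x.2 y.1 with h | ⟨r, hr⟩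
  · rw [mulPair_eq_zero h, mulPair_eq_zero (hx' ▸ hy' ▸ h)]
  · obtain ⟨⟨b, hb⟩, ⟨c, hc⟩⟩ : r ∈ rI x.2 ∩ rI y.1 := hr ▸ mem_rI_self r
    rw [mulPair_eq_cls hr hb hc, hx₁, hy₂,
      mulPair_eq_cls (hx' ▸ hy' ▸ hr) (by rw [hb, hx₂, mul_assoc]) (by rw [hc, hy₁, mul_assoc]),
      mul_assoc, mul_assoc]

theorem cls_smul_cls (a b c d : M) : smul (cls a b) (cls c d) = mulPair (a, b) (c, d) :=
  mulPair_congr (Quotient.mk_out (s := pSetoid) _) (Quotient.mk_out (s := pSetoid) _)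

theorem cls_smul_cls_eq_zero (a d : M) {b c : M} (h : rI b ∩ rI c = ∅) :
    smul (cls a b) (cls c d) = 0 := by
  rw [cls_smul_cls, mulPair_eq_zero h]

theorem cls_smul_cls_eq_cls (a d : M) {b c b' c' : M} (h : rI b ∩ rI c = rI (b * b'))
    (hbc : b * b' = c * c') : smul (cls a b) (cls c d) = cls (a * b') (d * c') := by
  rw [cls_smul_cls, mulPair_eq_cls h rfl hbc]

protected theorem zero_smul (x : S M) : smul 0 x = 0 := rfl

protected theorem smul_zero (x : S M) : smul x 0 = 0 := by
  cases x <;> rfl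

theorem eq_zero_or_exists_eq_cls (x : S M) : x = 0 ∨ ∃ p q, x = cls p q := by
  rcases x with _ | a
  · exact .inl rfl
  · obtain ⟨⟨p, q⟩, rfl⟩ := Quotient.exists_rep a
    exact .inr ⟨p, q, rfl⟩

theorem cls_smul_cls_mul_eq_zero (a d u : M) {b c : M} (h : rI b ∩ rI c = ∅) :
    smul (cls a b) (cls (c * u) d) = 0 :=
  cls_smul_cls_eq_zero a d <|
    Set.subset_empty_iff.mp (h ▸ Set.inter_subset_inter_right _ (rI_mul_subset c u))

theorem cls_mul_smul_cls_eq_zero (a d u : M) {b c : M} (h : rI b ∩ rI c = ∅) :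
    smul (cls a (b * u)) (cls c d) = 0 :=
  cls_smul_cls_eq_zero a d <|
    Set.subset_empty_iff.mp (h ▸ Set.inter_subset_inter_left _ (rI_mul_subset b u))

theorem cls_smul_assoc_of_lcm (a₁ c₂ : M) {a₂ b₁ b₂ c₁ s t u v : M}
    (hab : rI a₂ ∩ rI b₁ = rI (a₂ * s)) (hst : a₂ * s = b₁ * t)
    (hbc : rI b₂ ∩ rI c₁ = rI (b₂ * u)) (huv : b₂ * u = c₁ * v) :
    smul (cls (a₁ * s) (b₂ * t)) (cls c₁ c₂) = smul (cls a₁ a₂) (cls (b₁ * u) (c₂ * v)) := by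
  have hba : rI b₁ ∩ rI a₂ = rI (b₁ * t) := by rw [Set.inter_comm, hab, hst]
  have hL : rI (b₂ * t) ∩ rI c₁ = (b₂ * ·) '' (rI t ∩ rI u) := rI_mul_inter_rI hbc
  have hR : rI a₂ ∩ rI (b₁ * u) = (b₁ * ·) '' (rI t ∩ rI u) := by
    rw [Set.inter_comm, rI_mul_inter_rI hba, Set.inter_comm]
  rcases disjoint_or_exists_lcm t u with htu | ⟨t', u', htu, htu'⟩
  · rw [cls_smul_cls_eq_zero _ _ (by rw [hL, htu, Set.image_empty]),
      cls_smul_cls_eq_zero _ _ (by rw [hR, htu, Set.image_empty])]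
  · rw [cls_smul_cls_eq_cls (b' := t') (c' := v * u') _ _
        (by rw [hL, htu, image_mul_left_rI, mul_assoc])
        (by rw [mul_assoc, htu', ← mul_assoc, huv, mul_assoc]),
      cls_smul_cls_eq_cls (b' := s * t') (c' := u') _ _
        (by rw [hR, htu, image_mul_left_rI, ← mul_assoc, ← hst, mul_assoc])
        (by rw [← mul_assoc, hst, mul_assoc, htu', mul_assoc]),
      mul_assoc, mul_assoc]

theorem cls_smul_assoc (a₁ a₂ b₁ b₂ c₁ c₂ : M) :
    smul (smul (cls a₁ a₂) (cls b₁ b₂)) (cls c₁ c₂) =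
      smul (cls a₁ a₂) (smul (cls b₁ b₂) (cls c₁ c₂)) := by
  rcases disjoint_or_exists_lcm a₂ b₁ with hab | ⟨s, t, hab, hst⟩ <;>
    rcases disjoint_or_exists_lcm b₂ c₁ with hbc | ⟨u, v, hbc, huv⟩
  · rw [cls_smul_cls_eq_zero _ _ hab, cls_smul_cls_eq_zero _ _ hbc, RightLCM.zero_smul,
      RightLCM.smul_zero]
  · rw [cls_smul_cls_eq_zero _ _ hab, cls_smul_cls_eq_cls _ _ hbc huv, RightLCM.zero_smul,
      cls_smul_cls_mul_eq_zero _ _ _ hab]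
  · rw [cls_smul_cls_eq_cls _ _ hab hst, cls_smul_cls_eq_zero _ _ hbc, RightLCM.smul_zero,
      cls_mul_smul_cls_eq_zero _ _ _ hbc]
  · rw [cls_smul_cls_eq_cls _ _ hab hst, cls_smul_cls_eq_cls _ _ hbc huv]
    exact cls_smul_assoc_of_lcm a₁ c₂ hab hst hbc huv

end RightLCM

open RightLCM in
/-- The multiplication on `S = {[p,q]} ∪ {0}` is associative. -/
theorem stmt3 {M : Type*} [RightLCM M] (a b c : S M) :
    smul (smul a b) c = smul a (smul b c) := by
  rcases eq_zero_or_exists_eq_cls a with rfl | ⟨a₁, a₂, rfl⟩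
  · rfl
  rcases eq_zero_or_exists_eq_cls b with rfl | ⟨b₁, b₂, rfl⟩
  · rw [RightLCM.smul_zero, RightLCM.zero_smul, RightLCM.smul_zero]
  rcases eq_zero_or_exists_eq_cls c with rfl | ⟨c₁, c₂, rfl⟩
  · simp only [RightLCM.smul_zero]
  exact cls_smul_assoc a₁ a₂ b₁ b₂ c₁ c₂
end

section
/- Let S be an inverse semigroup with zero. The set S_0 := {s ∈ S : s*s e ≠ 0 and ss* e ≠ 0 for all nonzero idempotents e} is closed under multiplication and under the inverse operation, hence is an inverse subsemigroup of S. -/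
/-! Idempotents of an inverse semigroup commute, so for an idempotent `e` conjugation gives
`inv s * (s * e * inv s) * s = inv s * s * e` and `s * (inv s * s * e) * inv s = s * e * inv s`;
with an absorbing zero, `s * e * inv s = 0 ↔ inv s * s * e = 0`. Thus `s` lies in the core iff
conjugation by `s` and by `inv s` sends nonzero idempotents to nonzero (idempotent) elements,
a condition that is stable under `inv` and, since `inv (s * t) = inv t * inv s`, under products. -/

structure IsSemigroupInverse {S : Type*} [Semigroup S] (inv : S → S) : Prop where
  mul_inv_mul : ∀ s, s * inv s * s = s
  inv_mul_inv : ∀ s, inv s * s * inv s = inv s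
  eq_inv : ∀ s t, s * t * s = s → t * s * t = t → t = inv s

namespace IsSemigroupInverse

variable {S : Type*} [Semigroup S] {inv : S → S}

theorem inv_inv (h : IsSemigroupInverse inv) (s : S) : inv (inv s) = s :=
  (h.eq_inv (inv s) s (h.inv_mul_inv s) (h.mul_inv_mul s)).symm

theorem inv_eq_self_of_isIdempotentElem (h : IsSemigroupInverse inv) {e : S}
    (he : IsIdempotentElem e) : inv e = e :=
  (h.eq_inv e e (by rw [he.eq, he.eq]) (by rw [he.eq, he.eq])).symm

theorem isIdempotentElem_inv_mul_self (h : IsSemigroupInverse inv) (s : S) :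
    IsIdempotentElem (inv s * s) := by
  rw [IsIdempotentElem, ← mul_assoc, h.inv_mul_inv]

theorem isIdempotentElem_mul_inv_self (h : IsSemigroupInverse inv) (s : S) :
    IsIdempotentElem (s * inv s) := by
  rw [IsIdempotentElem, ← mul_assoc, h.mul_inv_mul]

/-- With `x = inv (e * f)`, the element `f * x * e` is also an inverse of `e * f`, so it equals
`x`; this makes `x`, hence its inverse `e * f`, idempotent. -/
theorem isIdempotentElem_mul (h : IsSemigroupInverse inv) {e f : S}
    (he : IsIdempotentElem e) (hf : IsIdempotentElem f) : IsIdempotentElem (e * f) := by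
  set x := inv (e * f)
  have hx₁ : e * f * x * (e * f) = e * f := h.mul_inv_mul _
  have hx₂ : x * (e * f) * x = x := h.inv_mul_inv _
  have hfxe : f * x * e = x := by
    refine h.eq_inv (e * f) (f * x * e) ?_ ?_
    · calc e * f * (f * x * e) * (e * f) = e * (f * f) * x * ((e * e) * f) := by
            simp only [mul_assoc]
        _ = e * f * x * (e * f) := by rw [he.eq, hf.eq]
        _ = e * f := hx₁
    · calc f * x * e * (e * f) * (f * x * e) = f * (x * ((e * e) * (f * f)) * x) * e := by
            simp only [mul_assoc]
        _ = f * x * e := by rw [he.eq, hf.eq, hx₂]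
  have hxx : IsIdempotentElem x :=
    calc x * x = f * (x * (e * f) * x) * e := by
          conv_lhs => rw [← hfxe]
          simp only [mul_assoc]
      _ = x := by rw [hx₂, hfxe]
  rw [← h.inv_inv (e * f), h.inv_eq_self_of_isIdempotentElem hxx]
  exact hxx

theorem isIdempotentElem_comm (h : IsSemigroupInverse inv) {e f : S}
    (he : IsIdempotentElem e) (hf : IsIdempotentElem f) : e * f = f * e := by
  have hef := h.isIdempotentElem_mul he hf
  have hfe := h.isIdempotentElem_mul hf he
  have : f * e = inv (e * f) := by
    refine h.eq_inv (e * f) (f * e) ?_ ?_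
    · calc e * f * (f * e) * (e * f) = e * (f * f) * (e * e) * f := by simp only [mul_assoc]
        _ = e * f * (e * f) := by rw [he.eq, hf.eq]; simp only [mul_assoc]
        _ = e * f := hef.eq
    · calc f * e * (e * f) * (f * e) = f * (e * e) * (f * f) * e := by simp only [mul_assoc]
        _ = f * e * (f * e) := by rw [he.eq, hf.eq]; simp only [mul_assoc]
        _ = f * e := hfe.eq
  rw [this, h.inv_eq_self_of_isIdempotentElem hef]

theorem inv_mul (h : IsSemigroupInverse inv) (s t : S) : inv (s * t) = inv t * inv s := by
  have hcomm := h.isIdempotentElem_comm (h.isIdempotentElem_mul_inv_self t)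
    (h.isIdempotentElem_inv_mul_self s)
  refine (h.eq_inv (s * t) (inv t * inv s) ?_ ?_).symm
  · calc s * t * (inv t * inv s) * (s * t) = s * (t * inv t * (inv s * s)) * t := by
          simp only [mul_assoc]
      _ = s * inv s * s * (t * inv t * t) := by rw [hcomm]; simp only [mul_assoc]
      _ = s * t := by rw [h.mul_inv_mul, h.mul_inv_mul]
  · calc inv t * inv s * (s * t) * (inv t * inv s)
          = inv t * (inv s * s * (t * inv t)) * inv s := by simp only [mul_assoc]
      _ = inv t * t * inv t * (inv s * s * inv s) := by rw [← hcomm]; simp only [mul_assoc]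
      _ = inv t * inv s := by rw [h.inv_mul_inv, h.inv_mul_inv]

theorem isIdempotentElem_conj (h : IsSemigroupInverse inv) (s : S) {e : S}
    (he : IsIdempotentElem e) : IsIdempotentElem (s * e * inv s) :=
  calc s * e * inv s * (s * e * inv s) = s * (e * (inv s * s)) * e * inv s := by
        simp only [mul_assoc]
    _ = s * inv s * s * (e * e) * inv s := by
        rw [h.isIdempotentElem_comm he (h.isIdempotentElem_inv_mul_self s)]
        simp only [mul_assoc]
    _ = s * e * inv s := by rw [h.mul_inv_mul, he.eq]

theorem conj_eq_zero_iff [Zero S] (hz : ∀ s : S, 0 * s = 0 ∧ s * 0 = 0)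
    (h : IsSemigroupInverse inv) (s : S) {e : S} (he : IsIdempotentElem e) :
    s * e * inv s = 0 ↔ inv s * s * e = 0 := by
  have hd := h.isIdempotentElem_inv_mul_self s
  constructor
  · intro h0
    calc inv s * s * e = inv s * s * (inv s * s) * e := by rw [hd.eq]
      _ = inv s * (s * e * inv s) * s := by
          rw [mul_assoc (inv s * s), h.isIdempotentElem_comm hd he]; simp only [mul_assoc]
      _ = 0 := by rw [h0, (hz _).2, (hz _).1]
  · intro h0
    calc s * e * inv s = s * (inv s * s * e) * inv s := by
          rw [← mul_assoc, ← mul_assoc, h.mul_inv_mul, mul_assoc]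
      _ = 0 := by rw [h0, (hz _).2, (hz _).1]

end IsSemigroupInverse

section Core

variable {S : Type*} [Semigroup S] [Zero S] {inv : S → S}

def core (inv : S → S) : Set S :=
  {s | ∀ e : S, IsIdempotentElem e → e ≠ 0 → inv s * s * e ≠ 0 ∧ s * inv s * e ≠ 0}

theorem mem_core_iff_conj (hz : ∀ s : S, 0 * s = 0 ∧ s * 0 = 0) (h : IsSemigroupInverse inv)
    (s : S) : s ∈ core inv ↔
      ∀ e : S, IsIdempotentElem e → e ≠ 0 → s * e * inv s ≠ 0 ∧ inv s * e * s ≠ 0 := by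
  refine forall_congr' fun e => forall_congr' fun he => ?_
  have hinv_conj := h.conj_eq_zero_iff hz (inv s) he
  rw [h.inv_inv] at hinv_conj
  simp only [ne_eq]
  rw [← h.conj_eq_zero_iff hz s he, ← hinv_conj]

theorem mul_mem_core (hz : ∀ s : S, 0 * s = 0 ∧ s * 0 = 0) (h : IsSemigroupInverse inv)
    {s t : S} (hs : s ∈ core inv) (ht : t ∈ core inv) : s * t ∈ core inv := by
  rw [mem_core_iff_conj hz h] at hs ht ⊢
  intro e he he0
  have hidem : IsIdempotentElem (inv s * e * s) := by
    simpa only [h.inv_inv] using h.isIdempotentElem_conj (inv s) he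
  constructor
  · calc s * t * e * inv (s * t) = s * (t * e * inv t) * inv s := by
          rw [h.inv_mul]; simp only [mul_assoc]
      _ ≠ 0 := (hs _ (h.isIdempotentElem_conj t he) (ht e he he0).1).1
  · calc inv (s * t) * e * (s * t) = inv t * (inv s * e * s) * t := by
          rw [h.inv_mul]; simp only [mul_assoc]
      _ ≠ 0 := (ht _ hidem (hs e he he0).2).2

theorem inv_mem_core (h : IsSemigroupInverse inv) {s : S} (hs : s ∈ core inv) :
    inv s ∈ core inv := by
  intro e he he0
  rw [h.inv_inv]
  exact (hs e he he0).symm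

end Core

/-- For an inverse semigroup `S` with zero (a semigroup with absorbing `0` in which
every element `s` has a unique generalized inverse `inv s`), the core
`S₀ = {s : s*s e ≠ 0 and ss* e ≠ 0 for every nonzero idempotent e}` is closed under
multiplication and the inverse operation, hence is an inverse subsemigroup. -/
theorem stmt13 {S : Type*} [Semigroup S] [Zero S]
    (hz : ∀ s : S, 0 * s = 0 ∧ s * 0 = 0)
    (inv : S → S)
    (hinv : ∀ s : S, s * inv s * s = s ∧ inv s * s * inv s = inv s)
    (huniq : ∀ s t : S, s * t * s = s → t * s * t = t → t = inv s)
    (S0 : Set S)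
    (hS0 : S0 = {s : S | ∀ e : S, e * e = e → e ≠ 0 →
      inv s * s * e ≠ 0 ∧ s * inv s * e ≠ 0}) :
    (∀ s ∈ S0, ∀ t ∈ S0, s * t ∈ S0) ∧ (∀ s ∈ S0, inv s ∈ S0) := by
  have h : IsSemigroupInverse inv := ⟨fun s => (hinv s).1, fun s => (hinv s).2, huniq⟩
  subst hS0
  exact ⟨fun s hs t ht => mul_mem_core hz h hs ht, fun s hs => inv_mem_core h hs⟩
end
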